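/- Let 𝒯 be a set of k rooted phylogenetic trees and let (ℬ₁,…,ℬ_d) be a decomposition of a sub-forest 𝒜 of 𝒯. If τ₁,…,τ_d are enclosed supertrees of ℬ₁,…,ℬ_d respectively, then the tree X obtained by connecting τ₁,…,τ_d to a new common root is an enclosed supertree of 𝒜. -/

import Mathlib

/-- Rooted, unordered, leaf-labelled trees:
a tree is a single labelled leaf, or an (internal) root node with a list of subtrees
attached to it.  Being unordered, such trees are considered up to the
isomorphism `PTree.Iso` below.  The empty tree is represented by `none` in
`Option (PTree α)`. -/
inductive PTree (α : Type) : Type where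
  | leaf : α → PTree α
  | node : List (PTree α) → PTree α

namespace PTree

variable {α : Type} [DecidableEq α]

theorem sizeOf_lt_of_mem {α : Type} {c : PTree α} {cs : List (PTree α)}
    (h : c ∈ cs) : sizeOf c < sizeOf (PTree.node cs) := by
  have := List.sizeOf_lt_of_mem h
  simp only [node.sizeOf_spec]; omega

/-- `Subtree s t` : `s` is the complete subtree rooted at some node of `t`. -/
inductive Subtree : PTree α → PTree α → Prop where
  | refl (t : PTree α) : Subtree t t
  | child {s c : PTree α} {cs : List (PTree α)} :
      c ∈ cs → Subtree s c → Subtree s (node cs)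

/-- The list of leaf labels of a tree. -/
def labelList : PTree α → List α
  | leaf a => [a]
  | node cs => cs.attach.flatMap (fun c => labelList c.1)
decreasing_by exact sizeOf_lt_of_mem c.2

/-- The set `L(T)` of leaf labels of a tree. -/
def labels (t : PTree α) : Finset α := t.labelList.toFinset

/-- The size of a tree: the number of its leaves. -/
def treeSize (t : PTree α) : ℕ := t.labels.card

/-- The label set of a possibly empty tree. -/
def olabels : Option (PTree α) → Finset α
  | none => ∅
  | some t => t.labels

/-- Connecting a list of trees by a common root.  The empty list yields the
empty tree and a single tree yields that tree itself (no degree-two node is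
created). -/
def connect : List (PTree α) → Option (PTree α)
  | [] => none
  | [t] => some t
  | ts => some (node ts)

/-- The restriction `T|S` of `T` to a label set `S`: all leaves with labels
outside `S` are removed and all internal nodes of degree two are suppressed. -/
def restrict (S : Finset α) : PTree α → Option (PTree α)
  | leaf a => if a ∈ S then some (leaf a) else none
  | node cs => connect ((cs.attach.map (fun c => restrict S c.1)).reduceOption)
decreasing_by exact sizeOf_lt_of_mem c.2

/-- Restriction of a possibly empty tree. -/
def orestrict (S : Finset α) (t : Option (PTree α)) : Option (PTree α) :=
  t.bind (restrict S)

/-- Isomorphism (equality) of unordered leaf-labelled trees: equality of trees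
up to reordering of the children of each node. -/
inductive Iso : PTree α → PTree α → Prop where
  | leaf (a : α) : Iso (leaf a) (leaf a)
  | node {cs ds ds' : List (PTree α)} :
      List.Forall₂ Iso cs ds' → ds'.Perm ds → Iso (node cs) (node ds)

/-- One edge contraction: the edge between a node and one of its (internal)
children is contracted, merging the child into the parent. -/
inductive Contract : PTree α → PTree α → Prop where
  | top (l r ds : List (PTree α)) :
      Contract (node (l ++ node ds :: r)) (node (l ++ ds ++ r))
  | child {c c' : PTree α} (l r : List (PTree α)) :
      Contract c c' → Contract (node (l ++ c :: r)) (node (l ++ c' :: r))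

/-- `T` refines `T'` (written `T ⊵ T'`): `T'` can be obtained (as an
unordered tree) by contracting some edges of `T`. -/
def Refines (t t' : PTree α) : Prop :=
  ∃ u, Relation.ReflTransGen Contract t u ∧ Iso u t'

/-- Refinement of possibly empty trees. -/
def ORefines : Option (PTree α) → Option (PTree α) → Prop
  | none, none => True
  | some a, some b => Refines a b
  | _, _ => False

/-- Isomorphism (equality) of possibly empty unordered trees. -/
def OIso : Option (PTree α) → Option (PTree α) → Prop
  | none, none => True
  | some a, some b => Iso a b
  | _, _ => False

/-- A possibly empty tree is (empty or) a complete subtree of `T`. -/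
def OSubtree (T : PTree α) : Option (PTree α) → Prop
  | none => True
  | some t => Subtree t T

/-- No internal node of degree two (after the usual suppression convention):
every internal node of the rooted tree has at least two children. -/
def NoUnaryNodes (T : PTree α) : Prop :=
  ∀ cs : List (PTree α), Subtree (node cs) T → 2 ≤ cs.length

/-- Every node of the rooted tree has degree at most `D` (the degree of the
root is its number of children; the degree of any other internal node is its
number of children plus one). -/
def DegLE (D : ℕ) (T : PTree α) : Prop :=
  (∀ cs : List (PTree α), T = node cs → cs.length ≤ D) ∧
  (∀ cs : List (PTree α), Subtree (node cs) T → node cs ≠ T → cs.length + 1 ≤ D)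

/-- A rooted tree is binary if every internal node has exactly two children. -/
def Binary (T : PTree α) : Prop :=
  ∀ cs : List (PTree α), Subtree (node cs) T → cs.length = 2

/-- A cut-subtree of `T`: the empty tree, or the tree obtained by selecting
some (at least one) of the subtrees attached to an internal node of `T` and
connecting those subtrees by a common root. -/
def IsCutSubtree (T : PTree α) (a : Option (PTree α)) : Prop :=
  a = none ∨ ∃ cs sel : List (PTree α),
    Subtree (node cs) T ∧ sel.Sublist cs ∧ sel ≠ [] ∧ a = connect sel

variable {k : ℕ}

/-- A cut-subforest of `𝒯`: each component is a cut-subtree of the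
corresponding tree, and at least one component is nonempty. -/
def IsCutSubforest (𝒯 : Fin k → PTree α) (A : Fin k → Option (PTree α)) : Prop :=
  (∀ i, IsCutSubtree (𝒯 i) (A i)) ∧ ∃ i, A i ≠ none

/-- A sub-forest of `𝒯`: each component is the empty tree or a complete
subtree rooted at some node of the corresponding tree, and at least one
component is nonempty. -/
def IsSubForest (𝒯 : Fin k → PTree α) (A : Fin k → Option (PTree α)) : Prop :=
  (∀ i, OSubtree (𝒯 i) (A i)) ∧ ∃ i, A i ≠ none

/-- The set of all labels occurring in the trees of `𝒯`. -/
def allLabels (𝒯 : Fin k → PTree α) : Finset α :=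
  Finset.univ.biUnion fun i => (𝒯 i).labels

/-- A (cut-sub)forest is terminal if each component is the empty tree or a
single leaf of the corresponding tree. -/
def IsTerminal (𝒯 : Fin k → PTree α) (A : Fin k → Option (PTree α)) : Prop :=
  ∀ i, A i = none ∨ ∃ a : α, A i = some (leaf a) ∧ Subtree (leaf a) (𝒯 i)

/-- `Λ(𝒜) = { l ∈ ⋃_j L(𝒜⁽ʲ⁾) ∣ ∀ i, l ∉ L(𝒯⁽ⁱ⁾) − L(𝒜⁽ⁱ⁾) }`. -/
def lambdaSet (𝒯 : Fin k → PTree α) (A : Fin k → Option (PTree α)) : Finset α :=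
  (Finset.univ.biUnion fun j => olabels (A j)).filter
    fun l => ∀ i, l ∉ (𝒯 i).labels \ olabels (A i)

/-- `Y` is a compatible supertree of the forest `A`:
`Y|L(A⁽ⁱ⁾) ⊵ A⁽ⁱ⁾|L(Y)` for every `i`. -/
def IsCompatibleSupertree (A : Fin k → Option (PTree α)) (Y : PTree α) : Prop :=
  ∀ i, ORefines (restrict (olabels (A i)) Y) (orestrict Y.labels (A i))

/-- `X` is an agreement supertree of the forest `A`:
`X|L(A⁽ⁱ⁾) = A⁽ⁱ⁾|L(X)` (as unordered trees) for every `i`. -/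
def IsAgreementSupertree (A : Fin k → Option (PTree α)) (X : PTree α) : Prop :=
  ∀ i, OIso (restrict (olabels (A i)) X) (orestrict X.labels (A i))

/-- An embedded supertree of a cut-subforest `A` of `𝒯`: a distinctly
leaf-labelled compatible supertree `Y` of `A`, with leaves labelled by labels
of `𝒯`, such that `L(Y) ∩ L(𝒯⁽ⁱ⁾) ⊆ L(A⁽ⁱ⁾)` for all `i`. -/
def IsEmbeddedSupertree (𝒯 : Fin k → PTree α) (A : Fin k → Option (PTree α))
    (Y : PTree α) : Prop :=
  Y.labelList.Nodup ∧ Y.labels ⊆ allLabels 𝒯 ∧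
  IsCompatibleSupertree A Y ∧
  ∀ i, Y.labels ∩ (𝒯 i).labels ⊆ olabels (A i)

/-- An enclosed supertree of a sub-forest `A` of `𝒯`: a distinctly
leaf-labelled agreement supertree `X` of `A`, with leaves labelled by labels
of `𝒯`, such that `L(X) ∩ L(𝒯⁽ⁱ⁾) ⊆ L(A⁽ⁱ⁾)` for all `i`. -/
def IsEnclosedSupertree (𝒯 : Fin k → PTree α) (A : Fin k → Option (PTree α))
    (X : PTree α) : Prop :=
  X.labelList.Nodup ∧ X.labels ⊆ allLabels 𝒯 ∧
  IsAgreementSupertree A X ∧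
  ∀ i, X.labels ∩ (𝒯 i).labels ⊆ olabels (A i)

/-- `mcsp 𝒯 A` : the maximum size of an embedded supertree of `A`. -/
noncomputable def mcsp (𝒯 : Fin k → PTree α) (A : Fin k → Option (PTree α)) : ℕ :=
  sSup {m : ℕ | ∃ Y : PTree α, IsEmbeddedSupertree 𝒯 A Y ∧ m = Y.treeSize}

/-- `masp 𝒯 A` : the maximum size of an enclosed supertree of `A`. -/
noncomputable def masp (𝒯 : Fin k → PTree α) (A : Fin k → Option (PTree α)) : ℕ :=
  sSup {m : ℕ | ∃ X : PTree α, IsEnclosedSupertree 𝒯 A X ∧ m = X.treeSize}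

end PTree

/-- `ListSplit s l r` : the list `s` is partitioned into the two
(complementary) sublists `l` and `r`. -/
inductive ListSplit {β : Type} : List β → List β → List β → Prop where
  | nil : ListSplit [] [] []
  | left {s l r : List β} (x : β) : ListSplit s l r → ListSplit (x :: s) (x :: l) r
  | right {s l r : List β} (x : β) : ListSplit s l r → ListSplit (x :: s) l (x :: r)

namespace PTree

variable {α : Type} [DecidableEq α] {k : ℕ}

/-- `(AL, AR)` is a bipartite of the forest `A`: for every `i` the set of
subtrees attached to the root of `A⁽ⁱ⁾` is partitioned into two sets, each of
which is connected by a common root to form `AL⁽ⁱ⁾` resp. `AR⁽ⁱ⁾` (an empty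
set of subtrees yielding the empty tree). -/
def IsBipartite (A AL AR : Fin k → Option (PTree α)) : Prop :=
  ∀ i, ∃ s sL sR : List (PTree α),
    A i = connect s ∧ ListSplit s sL sR ∧ AL i = connect sL ∧ AR i = connect sR

/-- Condition, at one component, for `(b 1, …, b d)` to decompose `a`:
either exactly one `b j` is isomorphic to `a` and the others are empty, or at
least two of the `b j` are nonempty and the nonempty ones are isomorphic to
pairwise distinct subtrees attached to the root of `a`. -/
def DecompAt {d : ℕ} (a : Option (PTree α)) (b : Fin d → Option (PTree α)) : Prop :=
  (∃ j, OIso (b j) a ∧ ∀ j', j' ≠ j → b j' = none) ∨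
  (∃ cs : List (PTree α), a = some (node cs) ∧
    2 ≤ (Finset.univ.filter fun j => (b j).isSome).card ∧
    ∃ idx : Fin d → Option (Fin cs.length),
      (∀ j, b j = none ↔ idx j = none) ∧
      (∀ j t m, b j = some t → idx j = some m → Iso t (cs.get m)) ∧
      (∀ j j' m, idx j = some m → idx j' = some m → j = j'))

/-- `(B 1, …, B d)` is a decomposition of the forest `A` (each `B j` being a
possibly empty sub-forest of `𝒯`). -/
def IsDecomposition (𝒯 : Fin k → PTree α) (A : Fin k → Option (PTree α))
    (d : ℕ) (B : Fin d → Fin k → Option (PTree α)) : Prop :=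
  2 ≤ d ∧ (∀ j i, OSubtree (𝒯 i) (B j i)) ∧ ∀ i, DecompAt (A i) fun j => B j i

/-- The root of the (nonempty) cut-subtree `a` is an internal node of `T`,
i.e. `a` is the complete subtree of `T` rooted at an internal node of `T`. -/
def InternalRooted (T : PTree α) : Option (PTree α) → Prop
  | none => False
  | some t => (∃ cs : List (PTree α), t = node cs) ∧ Subtree t T

/-- One rerooting step: the root is moved to an adjacent internal node. -/
inductive Reroot1 : PTree α → PTree α → Prop where
  | step (l r ds : List (PTree α)) :
      Reroot1 (node (l ++ node ds :: r)) (node (ds ++ [node (l ++ r)]))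

/-- `F` is a rooted variant of the unrooted tree (represented by) `T`:
`F` is obtained by rooting `T` at some internal node. -/
def RootedVariant (T F : PTree α) : Prop := Relation.ReflTransGen Reroot1 T F

/-- A maximal subtree of the unrooted tree (represented by) `T`: a rooted tree
obtained by first rooting `T` at some internal node and then removing at most
one nontrivial subtree attached to that node. -/
def IsMaximalSubtree (T A : PTree α) : Prop :=
  ∃ cs : List (PTree α), RootedVariant T (node cs) ∧
    (A = node cs ∨ ∃ l r ds : List (PTree α), cs = l ++ node ds :: r ∧ A = node (l ++ r))

/-- `T` (a rooted tree, rooted at an internal node) represents an unrooted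
tree without vertices of degree two: the root has at least three neighbours
and every other internal vertex has at least three neighbours as well. -/
def IsUnrootedRep (T : PTree α) : Prop :=
  (∃ cs : List (PTree α), T = node cs ∧ 3 ≤ cs.length) ∧
  ∀ cs : List (PTree α), Subtree (node cs) T → node cs ≠ T → 2 ≤ cs.length

end PTree

/-!
Restricted to the labels of `𝒜⁽ⁱ⁾`, the tree `X` obtained by joining the `τ_j` at a new root
only keeps, from each `τ_j`, the labels of `ℬ_j⁽ⁱ⁾`, because `τ_j` is enclosed. In a
decomposition the nonempty `ℬ_j⁽ⁱ⁾` are copies of pairwise distinct pieces of `𝒜⁽ⁱ⁾` (either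
`𝒜⁽ⁱ⁾` itself, or subtrees attached to its root), so the children of `X|L(𝒜⁽ⁱ⁾)` and those of
`𝒜⁽ⁱ⁾|L(X)` can be matched one by one, each matched pair agreeing because `τ_j` is an agreement
supertree of `ℬ_j`; pieces matched with no `τ_j` contain no label of `X`. The labels of distinct
`τ_j` are disjoint since root subtrees of the phylogenetic tree `𝒯⁽ⁱ⁾` have disjoint label sets.
-/

namespace List

variable {β γ : Type}

theorem Forall₂.imp_of_mem {R S : β → γ → Prop} {l₁ : List β} {l₂ : List γ}
    (H : ∀ a ∈ l₁, ∀ b, R a b → S a b) (h : Forall₂ R l₁ l₂) : Forall₂ S l₁ l₂ :=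
  ((forall₂_and_left (p := (· ∈ l₁)) l₁ l₂).2 ⟨fun _ ha => ha, h⟩).imp
    fun a b hab => H a hab.1 b hab.2

theorem Forall₂.trans_of_mem {R : β → β → Prop} {l₁ l₂ l₃ : List β}
    (H : ∀ a ∈ l₁, ∀ {b c}, R a b → R b c → R a c)
    (h₁₂ : Forall₂ R l₁ l₂) (h₂₃ : Forall₂ R l₂ l₃) : Forall₂ R l₁ l₃ := by
  induction h₁₂ generalizing l₃ with
  | nil => exact h₂₃
  | cons hab _ ih =>
    obtain _ | ⟨hbc, h₂₃⟩ := h₂₃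
    exact .cons (H _ mem_cons_self hab hbc)
      (ih (fun a ha => H a (mem_cons_of_mem _ ha)) h₂₃)

theorem forall₂_ofFn {R : β → γ → Prop} {n : ℕ} {f : Fin n → β} {g : Fin n → γ}
    (h : ∀ j, R (f j) (g j)) : Forall₂ R (ofFn f) (ofFn g) :=
  forall₂_iff_get.2 ⟨by simp, fun j _ _ => by simpa using h _⟩

theorem reduceOption_ofFn {n : ℕ} (f : Fin n → Option β) :
    (ofFn f).reduceOption = (finRange n).filterMap f := by
  simp [ofFn_eq_map, reduceOption, filterMap_map]

theorem reduceOption_ofFn_bind_perm {d n : ℕ} (idx : Fin d → Option (Fin n))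
    (g : Fin n → Option β) (hinj : ∀ j j' m, idx j = some m → idx j' = some m → j = j')
    (hg : ∀ m, (∀ j, idx j ≠ some m) → g m = none) :
    (ofFn fun j => (idx j).bind g).reduceOption.Perm (ofFn g).reduceOption := by
  rw [reduceOption_ofFn, reduceOption_ofFn, ← filterMap_filterMap]
  set L := (finRange d).filterMap idx
  have hL : L.Nodup := (nodup_finRange d).filterMap fun j j' m => hinj j j' m
  obtain ⟨L', hL', hsub⟩ := hL.subperm fun m _ => mem_finRange m
  obtain ⟨l, hl⟩ := hsub.exists_perm_append
  have hdisj := (nodup_append.1 (hl.nodup_iff.1 (nodup_finRange n))).2.2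
  have hl_none : l.filterMap g = [] := filterMap_eq_nil_iff.2 fun m hm =>
    hg m fun j hj => hdisj m (hL'.mem_iff.2 (mem_filterMap.2 ⟨j, mem_finRange j, hj⟩)) m hm rfl
  calc L.filterMap g ~ L'.filterMap g := (hL'.filterMap g).symm
    _ = (L' ++ l).filterMap g := by rw [filterMap_append, hl_none, append_nil]
    _ ~ (finRange n).filterMap g := (hl.filterMap g).symm

end List

namespace PTree

variable {α : Type}

theorem labelList_node (cs : List (PTree α)) : (node cs).labelList = cs.flatMap labelList := by
  rw [labelList, List.flatMap, List.flatMap, List.attach_map_val (l := cs) (f := labelList)]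

theorem Subtree.nodup_labelList {s T : PTree α} (h : Subtree s T) (hT : T.labelList.Nodup) :
    s.labelList.Nodup := by
  induction h with
  | refl => exact hT
  | child hc _ ih =>
    refine ih (List.Sublist.nodup ?_ hT)
    rw [labelList_node, List.flatMap]
    exact List.sublist_flatten_of_mem (List.mem_map_of_mem hc)

theorem Iso.refl : ∀ t : PTree α, Iso t t
  | .leaf a => .leaf a
  | .node cs => .node (List.forall₂_same.2 fun c _ => Iso.refl c) (List.Perm.refl cs)
decreasing_by exact sizeOf_lt_of_mem ‹_›

theorem Iso.trans : ∀ {t u v : PTree α}, Iso t u → Iso u v → Iso t v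
  | _, _, _, .leaf _, h₂ => h₂
  | .node cs, _, _, .node hf₁ hp₁, .node hf₂ hp₂ => by
    obtain ⟨l, hf, hp⟩ := List.perm_comp_forall₂ hp₁ hf₂
    exact .node (hf₁.trans_of_mem (fun c hc _ _ => Iso.trans (t := c)) hf) (hp.trans hp₂)
decreasing_by exact sizeOf_lt_of_mem hc

theorem Iso.labelList_perm : ∀ {t u : PTree α}, Iso t u → t.labelList.Perm u.labelList
  | _, _, .leaf _ => .refl _
  | .node cs, _, .node (ds' := ds') hf hp => by
    rw [labelList_node, labelList_node]
    have : (cs.flatMap labelList).Perm (ds'.flatMap labelList) := by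
      refine List.Perm.flatten_congr (List.forall₂_map_right_iff.2 (List.forall₂_map_left_iff.2 ?_))
      exact hf.imp_of_mem fun c hc _ h => Iso.labelList_perm (t := c) h
    exact this.trans (hp.flatMap_right labelList)
decreasing_by exact sizeOf_lt_of_mem hc

theorem OIso.refl : ∀ a : Option (PTree α), OIso a a
  | none => trivial
  | some t => Iso.refl t

theorem OIso.trans : ∀ {a b c : Option (PTree α)}, OIso a b → OIso b c → OIso a c
  | none, none, none, _, _ => trivial
  | some _, some _, some _, h₁, h₂ => Iso.trans h₁ h₂

theorem OIso.rel : ∀ {a b : Option (PTree α)}, OIso a b → Option.Rel Iso a b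
  | none, none, _ => .none
  | some _, some _, h => .some h

theorem connect_oiso {xs ys' ys : List (PTree α)} (hf : List.Forall₂ Iso xs ys')
    (hp : ys'.Perm ys) : OIso (connect xs) (connect ys) := by
  have hl : xs.length = ys.length := hf.length_eq.trans hp.length_eq
  match xs, ys, hf, hp with
  | [], [], _, _ => exact trivial
  | [_], [_], .cons h .nil, hp =>
    obtain rfl := List.singleton_inj.1 (List.perm_singleton.1 hp)
    exact h
  | _ :: _ :: _, _ :: _ :: _, hf, hp => exact Iso.node hf hp
  | [], _ :: _, _, _ | _ :: _, [], _, _ | [_], _ :: _ :: _, _, _ | _ :: _ :: _, [_], _, _ =>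
    simp at hl

section Decomposition

variable {d : ℕ} {a : Option (PTree α)} {b : Fin d → Option (PTree α)}

/-- Both cases of `DecompAt` match the nonempty `b j` injectively with pieces `ρ m` joined at
the root of `a`; in case (i) the only piece is `a` itself. -/
theorem DecompAt.exists_pieces (h : DecompAt a b) :
    ∃ (n : ℕ) (ρ : Fin n → PTree α) (idx : Fin d → Option (Fin n)),
      (a = connect (List.ofFn ρ) ∨ a = some (node (List.ofFn ρ))) ∧
      (∀ j, OIso (b j) ((idx j).map ρ)) ∧
      ∀ j j' m, idx j = some m → idx j' = some m → j = j' := by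
  rcases h with ⟨j₀, hj₀, hrest⟩ | ⟨cs, rfl, -, idx, hnone, hiso, hinj⟩
  · have hb : ∀ j, j ≠ j₀ → OIso (b j) none := fun j hj => by rw [hrest j hj]; trivial
    cases a with
    | none =>
      refine ⟨0, Fin.elim0, fun _ => none, .inl rfl, fun j => ?_, fun _ _ _ h => nomatch h⟩
      by_cases hj : j = j₀
      · exact hj ▸ hj₀
      · exact hb j hj
    | some t =>
      refine ⟨1, fun _ => t, fun j => if j = j₀ then some 0 else none, .inl rfl, fun j => ?_,
        fun j j' m h h' => ?_⟩
      · by_cases hj : j = j₀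
        · simpa [hj] using hj₀
        · simpa [hj] using hb j hj
      · simp only [Option.ite_none_right_eq_some] at h h'
        exact h.1.trans h'.1.symm
  · refine ⟨cs.length, cs.get, idx, .inr (by rw [List.ofFn_get]), fun j => ?_, hinj⟩
    cases hj : idx j with
    | none => rw [(hnone j).2 hj]; trivial
    | some m =>
      obtain ⟨t, ht⟩ := Option.ne_none_iff_exists'.1 (mt (hnone j).1 (by simp [hj]))
      rw [ht]
      exact hiso j t m ht hj

variable {l : List (PTree α)}

theorem nodup_labelList_node {T : PTree α} (h : a = connect l ∨ a = some (node l))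
    (hT : T.labelList.Nodup) (ha : OSubtree T a) : (node l).labelList.Nodup := by
  rcases h with rfl | rfl
  · match l, ha with
    | [], _ => simp [labelList_node]
    | [_], ha => simpa [labelList_node] using Subtree.nodup_labelList ha hT
    | _ :: _ :: _, ha => exact Subtree.nodup_labelList ha hT
  · exact Subtree.nodup_labelList ha hT

end Decomposition

variable [DecidableEq α]

theorem restrict_node (S : Finset α) (cs : List (PTree α)) :
    restrict S (node cs) = connect (cs.map (restrict S)).reduceOption := by
  rw [restrict, List.attach_map_val (l := cs) (f := restrict S)]

theorem mem_labels_leaf {x a : α} : x ∈ (leaf a).labels ↔ x = a := by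
  simp [labels, labelList]

theorem mem_labels_node {x : α} {cs : List (PTree α)} :
    x ∈ (node cs).labels ↔ ∃ c ∈ cs, x ∈ c.labels := by
  simp [labels, labelList_node]

section OfFn

variable {d : ℕ} (τ : Fin d → PTree α)

theorem mem_labels_node_ofFn {x : α} : x ∈ (node (List.ofFn τ)).labels ↔ ∃ j, x ∈ (τ j).labels := by
  simp [mem_labels_node]

theorem nodup_labelList_node_ofFn :
    (node (List.ofFn τ)).labelList.Nodup ↔
      (∀ j, (τ j).labelList.Nodup) ∧ Pairwise fun j j' => Disjoint (τ j).labels (τ j').labels := by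
  simp only [labelList_node, List.nodup_flatMap, List.forall_mem_ofFn_iff, List.pairwise_ofFn,
    labels, List.disjoint_toFinset_iff_disjoint]
  refine and_congr_right fun _ => ⟨fun h j j' hne => ?_, fun h j j' hlt => h hlt.ne⟩
  rcases hne.lt_or_gt with hlt | hlt
  exacts [h hlt, (h hlt).symm]

theorem restrict_node_ofFn (S : Finset α) :
    restrict S (node (List.ofFn τ)) =
      connect (List.ofFn fun j => restrict S (τ j)).reduceOption := by
  rw [restrict_node, List.map_ofFn]
  rfl

end OfFn

theorem Subtree.labels_subset {s T : PTree α} (h : Subtree s T) : s.labels ⊆ T.labels := by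
  induction h with
  | refl => exact subset_rfl
  | child hc _ ih => exact ih.trans fun x hx => mem_labels_node.2 ⟨_, hc, hx⟩

theorem OSubtree.olabels_subset {T : PTree α} :
    ∀ {a : Option (PTree α)}, OSubtree T a → olabels a ⊆ T.labels
  | none, _ => Finset.empty_subset _
  | some _, h => Subtree.labels_subset h

theorem Iso.labels_eq {t u : PTree α} (h : Iso t u) : t.labels = u.labels :=
  List.toFinset_eq_of_perm _ _ h.labelList_perm

theorem OIso.olabels_eq : ∀ {a b : Option (PTree α)}, OIso a b → olabels a = olabels b
  | none, none, _ => rfl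
  | some _, some _, h => Iso.labels_eq h

theorem restrict_congr : ∀ (t : PTree α) {S S' : Finset α},
    (∀ x ∈ t.labels, x ∈ S ↔ x ∈ S') → restrict S t = restrict S' t
  | .leaf a, S, S', h => by
    simp only [restrict, h a (mem_labels_leaf.2 rfl)]
  | .node cs, S, S', h => by
    rw [restrict_node, restrict_node, List.map_congr_left fun c hc =>
      restrict_congr c fun x hx => h x (mem_labels_node.2 ⟨c, hc, hx⟩)]
decreasing_by exact sizeOf_lt_of_mem hc

theorem restrict_eq_none : ∀ (t : PTree α) {S : Finset α},
    (∀ x ∈ t.labels, x ∉ S) → restrict S t = none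
  | .leaf a, S, h => by
    simp only [restrict, h a (mem_labels_leaf.2 rfl), if_false]
  | .node cs, S, h => by
    rw [restrict_node, List.reduceOption, List.filterMap_map, Function.id_comp,
      List.filterMap_eq_nil_iff.2 fun c hc =>
        restrict_eq_none c fun x hx => h x (mem_labels_node.2 ⟨c, hc, hx⟩)]
    rfl
decreasing_by exact sizeOf_lt_of_mem hc

theorem restrict_iso : ∀ {t u : PTree α} (S : Finset α), Iso t u →
    OIso (restrict S t) (restrict S u)
  | _, _, _, .leaf _ => OIso.refl _
  | .node cs, _, S, .node (ds' := ds') hf hp => by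
    rw [restrict_node, restrict_node]
    refine connect_oiso (ys' := (ds'.map (restrict S)).reduceOption) ?_ ((hp.map _).filterMap id)
    refine List.rel_filterMap (fun _ _ h => OIso.rel h) ?_
    refine List.forall₂_map_right_iff.2 (List.forall₂_map_left_iff.2 ?_)
    exact hf.imp_of_mem fun c hc _ h => restrict_iso (t := c) S h
decreasing_by exact sizeOf_lt_of_mem hc

theorem orestrict_oiso : ∀ {a b : Option (PTree α)} (S : Finset α), OIso a b →
    OIso (orestrict S a) (orestrict S b)
  | none, none, _, _ => trivial
  | some _, some _, S, h => restrict_iso S h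

theorem orestrict_connect (S : Finset α) :
    ∀ l : List (PTree α), orestrict S (connect l) = restrict S (node l)
  | [] => by rw [restrict_node]; rfl
  | [t] => by
    rw [restrict_node]
    cases h : restrict S t <;> simp [orestrict, connect, h, List.reduceOption]
  | _ :: _ :: _ => rfl

section Gluing

variable {d n : ℕ} {τ : Fin d → PTree α} {ρ : Fin n → PTree α} {idx : Fin d → Option (Fin n)}

theorem olabels_map_subset (o : Option (Fin n)) :
    olabels (o.map ρ) ⊆ (node (List.ofFn ρ)).labels := by
  cases o with
  | none => exact Finset.empty_subset _
  | some m => exact fun x hx => (mem_labels_node_ofFn ρ).2 ⟨m, hx⟩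

theorem eq_some_of_mem_olabels_map (hY : (node (List.ofFn ρ)).labelList.Nodup)
    {o : Option (Fin n)} {m : Fin n} {x : α} (hm : x ∈ (ρ m).labels)
    (ho : x ∈ olabels (o.map ρ)) : o = some m := by
  cases o with
  | none => exact absurd ho (Finset.notMem_empty x)
  | some m' =>
    by_contra hne
    exact Finset.disjoint_left.1
      (((nodup_labelList_node_ofFn ρ).1 hY).2 fun h => hne (congrArg some h)) ho hm

/-- The children `τ j|L(Y)` of `X|L(Y)` are, up to order, the children `ρ m|L(X)` of `Y|L(X)`:
the labels of `τ j` in `Y` all lie in the piece `ρ (idx j)`. -/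
theorem oiso_restrict_node_ofFn_of_matching (hY : (node (List.ofFn ρ)).labelList.Nodup)
    (hinj : ∀ j j' m, idx j = some m → idx j' = some m → j = j')
    (hagree : ∀ j, OIso (restrict (olabels ((idx j).map ρ)) (τ j))
      (orestrict (τ j).labels ((idx j).map ρ)))
    (hcap : ∀ j, (τ j).labels ∩ (node (List.ofFn ρ)).labels ⊆ olabels ((idx j).map ρ)) :
    OIso (restrict (node (List.ofFn ρ)).labels (node (List.ofFn τ)))
      (restrict (node (List.ofFn τ)).labels (node (List.ofFn ρ))) := by
  have hidx : ∀ j m x, x ∈ (ρ m).labels → x ∈ (τ j).labels → idx j = some m :=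
    fun j m x hm hj => eq_some_of_mem_olabels_map hY hm
      (hcap j (Finset.mem_inter.2 ⟨hj, (mem_labels_node_ofFn ρ).2 ⟨m, hm⟩⟩))
  rw [restrict_node_ofFn, restrict_node_ofFn]
  refine connect_oiso (List.rel_filterMap (fun _ _ h => OIso.rel h) (List.forall₂_ofFn fun j => ?_))
    (List.reduceOption_ofFn_bind_perm idx _ hinj fun m hm => ?_)
  · have hagree := hagree j
    have hcap := hcap j
    cases hj : idx j with
    | none =>
      rw [restrict_eq_none (τ j) fun x hx hY => by
        simpa [hj, olabels] using hcap (Finset.mem_inter.2 ⟨hx, hY⟩)]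
      trivial
    | some m =>
      simp only [hj, Option.map_some, olabels, orestrict, Option.bind_some] at hagree hcap ⊢
      rw [restrict_congr (τ j) fun x hx => ⟨fun hY => hcap (Finset.mem_inter.2 ⟨hx, hY⟩),
          fun hm => (mem_labels_node_ofFn ρ).2 ⟨m, hm⟩⟩,
        restrict_congr (ρ m) (S' := (τ j).labels) fun x hx => ⟨fun hX => ?_,
          fun hj => (mem_labels_node_ofFn τ).2 ⟨j, hj⟩⟩]
      · exact hagree
      · obtain ⟨j', hj'⟩ := (mem_labels_node_ofFn τ).1 hX
        exact hinj j' j m (hidx j' m x hx hj') hj ▸ hj'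
  · exact restrict_eq_none (ρ m) fun x hx hX =>
      let ⟨j, hj⟩ := (mem_labels_node_ofFn τ).1 hX
      hm j (hidx j m x hx hj)

end Gluing

section Pieces

variable {l : List (PTree α)} {a : Option (PTree α)}

theorem olabels_connect : ∀ l : List (PTree α), olabels (connect l) = (node l).labels
  | [] => by simp [olabels, connect, labels, labelList_node]
  | [t] => by simp [olabels, connect, labels, labelList_node]
  | _ :: _ :: _ => rfl

theorem orestrict_eq_restrict_node (h : a = connect l ∨ a = some (node l)) (S : Finset α) :
    orestrict S a = restrict S (node l) := by
  rcases h with rfl | rfl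
  exacts [orestrict_connect S l, rfl]

theorem olabels_eq_labels_node (h : a = connect l ∨ a = some (node l)) :
    olabels a = (node l).labels := by
  rcases h with rfl | rfl
  exacts [olabels_connect l, rfl]

variable {d : ℕ} {b : Fin d → Option (PTree α)}

theorem DecompAt.olabels_subset (h : DecompAt a b) (j : Fin d) : olabels (b j) ⊆ olabels a := by
  obtain ⟨n, ρ, idx, ha, hb, -⟩ := h.exists_pieces
  rw [(hb j).olabels_eq, olabels_eq_labels_node ha]
  exact olabels_map_subset _

variable {T : PTree α}

theorem DecompAt.disjoint_olabels (hT : T.labelList.Nodup) (ha : OSubtree T a)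
    (h : DecompAt a b) {j j' : Fin d} (hne : j ≠ j') :
    Disjoint (olabels (b j)) (olabels (b j')) := by
  obtain ⟨n, ρ, idx, ha', hb, hinj⟩ := h.exists_pieces
  have hY := nodup_labelList_node ha' hT ha
  rw [(hb j).olabels_eq, (hb j').olabels_eq, Finset.disjoint_left]
  intro x hx hx'
  cases hj : idx j with
  | none => simp [hj, olabels] at hx
  | some m =>
    rw [hj] at hx
    exact hne (hinj j j' m hj (eq_some_of_mem_olabels_map hY hx hx'))

theorem DecompAt.oiso_restrict_node_ofFn (hT : T.labelList.Nodup) (ha : OSubtree T a)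
    (h : DecompAt a b) (τ : Fin d → PTree α)
    (hagree : ∀ j, OIso (restrict (olabels (b j)) (τ j)) (orestrict (τ j).labels (b j)))
    (hcap : ∀ j, (τ j).labels ∩ T.labels ⊆ olabels (b j)) :
    OIso (restrict (olabels a) (node (List.ofFn τ))) (orestrict (node (List.ofFn τ)).labels a) := by
  obtain ⟨n, ρ, idx, ha', hb, hinj⟩ := h.exists_pieces
  have hsub : (node (List.ofFn ρ)).labels ⊆ T.labels :=
    olabels_eq_labels_node ha' ▸ ha.olabels_subset
  rw [olabels_eq_labels_node ha', orestrict_eq_restrict_node ha']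
  refine oiso_restrict_node_ofFn_of_matching (nodup_labelList_node ha' hT ha) hinj
    (fun j => ?_) (fun j => ?_)
  · rw [← (hb j).olabels_eq]
    exact (hagree j).trans (orestrict_oiso _ (hb j))
  · rw [← (hb j).olabels_eq]
    exact (Finset.inter_subset_inter_left hsub).trans (hcap j)

end Pieces

end PTree

/-- If `(ℬ₁,…,ℬ_d)` is a decomposition of a sub-forest `𝒜`
of `𝒯` and `τ₁,…,τ_d` are enclosed supertrees of `ℬ₁,…,ℬ_d` respectively,
then the tree obtained by connecting `τ₁,…,τ_d` to a new common root is an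
enclosed supertree of `𝒜`. -/
theorem maximum_agreement_supertree_stmt10
    {α : Type} [DecidableEq α] {k : ℕ} (𝒯 : Fin k → PTree α)
    (hphylo : ∀ i, (𝒯 i).labelList.Nodup)
    (A : Fin k → Option (PTree α))
    (hA : PTree.IsSubForest 𝒯 A)
    {d : ℕ} (B : Fin d → Fin k → Option (PTree α))
    (hdec : PTree.IsDecomposition 𝒯 A d B)
    (τ : Fin d → PTree α)
    (hτ : ∀ j, PTree.IsEnclosedSupertree 𝒯 (B j) (τ j)) :
    PTree.IsEnclosedSupertree 𝒯 A (PTree.node (List.ofFn τ)) := by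
  obtain ⟨hA, -⟩ := hA
  obtain ⟨-, -, hdec⟩ := hdec
  have hcap : ∀ j i, (τ j).labels ∩ (𝒯 i).labels ⊆ PTree.olabels (B j i) :=
    fun j => (hτ j).2.2.2
  refine ⟨(PTree.nodup_labelList_node_ofFn τ).2 ⟨fun j => (hτ j).1, fun j j' hne => ?_⟩,
    fun x hx => ?_, fun i => ?_, fun i x hx => ?_⟩
  · refine Finset.disjoint_left.2 fun x hx hx' => ?_
    obtain ⟨i, -, hi⟩ := Finset.mem_biUnion.1 ((hτ j).2.1 hx)
    exact Finset.disjoint_left.1 ((hdec i).disjoint_olabels (hphylo i) (hA i) hne)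
      (hcap j i (Finset.mem_inter.2 ⟨hx, hi⟩)) (hcap j' i (Finset.mem_inter.2 ⟨hx', hi⟩))
  · obtain ⟨j, hj⟩ := (PTree.mem_labels_node_ofFn τ).1 hx
    exact (hτ j).2.1 hj
  · exact (hdec i).oiso_restrict_node_ofFn (hphylo i) (hA i) τ (fun j => (hτ j).2.2.1 i)
      fun j => hcap j i
  · obtain ⟨hX, hT⟩ := Finset.mem_inter.1 hx
    obtain ⟨j, hj⟩ := (PTree.mem_labels_node_ofFn τ).1 hX
    exact (hdec i).olabels_subset j (hcap j i (Finset.mem_inter.2 ⟨hj, hT⟩))
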